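/- Let D be an O-consistent Defeasible Theory (the superiority relation > is acyclic and for no literal l does the set of facts F contain both O l and O∼l, or both O l and P∼l). Then for every literal l, if D ⊢ +∂_O l then l is weakly permitted in D, i.e. D ⊢ −∂_O ∼l (the deontic principle 'Ought implies Can' holds for weak permission). -/

import Mathlib

/- Core formalization of the Defeasible Deontic Logic with obligations (O) and
   strong permissions (P) of Governatori, Olivieri, Rotolo, Scannapieco,
   "Computing Strong and Weak Permissions in Defeasible Logic". -/

namespace DDL

/-- The two modalities: O (obligation) and P (permission). -/
inductive Modality : Type
  | O | P
deriving DecidableEq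

/-- Literals over a set of propositional atoms. -/
inductive Lit (Atom : Type) : Type
  | pos : Atom → Lit Atom
  | neg : Atom → Lit Atom
deriving DecidableEq

/-- The complementary literal `∼q`. -/
def Lit.compl {Atom : Type} : Lit Atom → Lit Atom
  | .pos a => .neg a
  | .neg a => .pos a

/-- Elements that may occur in the antecedent of a rule: plain literals and
    (possibly negated) modal literals `□l` / `¬□l`.  The Boolean is `true` for
    `□l` and `false` for `¬□l`. -/
inductive AElem (Atom : Type) : Type
  | lit : Lit Atom → AElem Atom
  | mlit : Bool → Modality → Lit Atom → AElem Atom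
deriving DecidableEq

/-- Kinds of rules: defeasible obligation rules `⇒_O`, defeasible permission
    rules `⇒_P`, and defeaters `⤳`. -/
inductive RuleKind : Type
  | obl | perm | defeater
deriving DecidableEq

/-- A rule `A(r) ↪ C(r)`.  The consequent (an ⊘-expression) is represented by
    its ⊗-part `otimes` followed by its ⊙-part `odot`. -/
structure Rule (Atom : Type) : Type where
  ant : Finset (AElem Atom)
  kind : RuleKind
  otimes : List (Lit Atom)
  odot : List (Lit Atom)
deriving DecidableEq

variable {Atom : Type} [DecidableEq Atom]

/-- The consequent chain of a rule. -/
def Rule.head (r : Rule Atom) : List (Lit Atom) := r.otimes ++ r.odot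

/-- `q` appears at (0-based) index `j` of the consequent of `r`:  `r ∈ R[q, j+1]`. -/
def Rule.occ (r : Rule Atom) (q : Lit Atom) (j : ℕ) : Prop := r.head[j]? = some q

/-- `r ∈ R^O[q, j+1]`: `q` appears at (0-based) index `j`, and either `j = 0` and
    the mode of `r` is O, or `j > 0` and the operator preceding `q` is ⊗. -/
def Rule.occO (r : Rule Atom) (q : Lit Atom) (j : ℕ) : Prop :=
  (j = 0 ∧ r.kind = RuleKind.obl ∧ r.head[0]? = some q) ∨
  (0 < j ∧ r.otimes[j]? = some q)

/-- `r ∈ R^P[q, j+1]`: `q` appears at (0-based) index `j`, and either `j = 0` and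
    the mode of `r` is P, or `j > 0` and the operator preceding `q` is ⊙. -/
def Rule.occP (r : Rule Atom) (q : Lit Atom) (j : ℕ) : Prop :=
  (j = 0 ∧ r.kind = RuleKind.perm ∧ r.head[0]? = some q) ∨
  (0 < j ∧ r.otimes.length ≤ j ∧ r.head[j]? = some q)

/-- `r ∈ R^□[q, j+1]` for `□ ∈ {O, P}`. -/
def Rule.occM (r : Rule Atom) (m : Modality) (q : Lit Atom) (j : ℕ) : Prop :=
  match m with
  | Modality.O => r.occO q j
  | Modality.P => r.occP q j

/-- A Defeasible Theory `D = (F, R, >)`. -/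
structure Theory (Atom : Type) : Type where
  F : Finset (AElem Atom)
  R : Finset (Rule Atom)
  sup : Rule Atom → Rule Atom → Prop

/-- Tagged literals `±∂_□ q`: the Boolean is `true` for `+∂` and `false` for `-∂`. -/
abbrev Tag (Atom : Type) := Bool × Modality × Lit Atom

/-- An initial part `P(1..n)` of a proof. -/
abbrev Pfx (Atom : Type) := List (Tag Atom)

namespace Theory

variable (D : Theory Atom) (Pre : Pfx Atom)

/-- Conditions (1.1)-(1.5) on the antecedent of a rule (all satisfied). -/
def antOK (r : Rule Atom) : Prop :=
  ∀ a ∈ r.ant,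
    match a with
    | AElem.lit l => AElem.lit l ∈ D.F
    | AElem.mlit b m l => (b, m, l) ∈ Pre

/-- Conditions (1.1)-(1.5) for a rule being discarded (some antecedent fails). -/
def antFails (r : Rule Atom) : Prop :=
  ∃ a ∈ r.ant,
    match a with
    | AElem.lit l => AElem.lit l ∉ D.F
    | AElem.mlit b m l => (!b, m, l) ∈ Pre

/-- `c` is a derived and violated obligation: `+∂_O c ∈ P(1..n)` and
    (`c ∉ F` or `∼c ∈ F`). -/
def violated (c : Lit Atom) : Prop :=
  (true, Modality.O, c) ∈ Pre ∧ (AElem.lit c ∉ D.F ∨ AElem.lit c.compl ∈ D.F)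

/-- Definition: `r` is applicable for `q` at index `j` in the condition for
    `±∂_O` (Definition of applicability for obligations). -/
def applO (r : Rule Atom) (q : Lit Atom) (j : ℕ) : Prop :=
  r.occO q j ∧ D.antOK Pre r ∧
  ∀ k < j, ∀ c, r.head[k]? = some c → D.violated Pre c

/-- Definition: `r` is applicable for `q` at index `j` in the condition for
    `±∂_P` (Definition of applicability for permissions). -/
def applP (r : Rule Atom) (q : Lit Atom) (j : ℕ) : Prop :=
  r.occP q j ∧ D.antOK Pre r ∧
  (∀ (k : ℕ) (c : Lit Atom), r.otimes[k]? = some c → D.violated Pre c) ∧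
  (∀ k, r.otimes.length ≤ k → k < j → ∀ c, r.head[k]? = some c → (false, Modality.P, c) ∈ Pre)

/-- Applicability of a defeater (its head is a single literal). -/
def applDef (r : Rule Atom) (q : Lit Atom) (j : ℕ) : Prop :=
  r.kind = RuleKind.defeater ∧ j = 0 ∧ r.head[0]? = some q ∧ D.antOK Pre r

/-- Generic applicability of a rule for `q` at index `j`. -/
def appl (r : Rule Atom) (q : Lit Atom) (j : ℕ) : Prop :=
  D.applO Pre r q j ∨ D.applP Pre r q j ∨ D.applDef Pre r q j

/-- Definition: `r` is discarded for a literal at index `j` in the conditions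
    for `±∂_O` / `±∂_P`. -/
def discardedAt (r : Rule Atom) (j : ℕ) : Prop :=
  D.antFails Pre r ∨
  (∃ (k : ℕ) (c : Lit Atom), r.otimes[k]? = some c ∧
    ((false, Modality.O, c) ∈ Pre ∨ AElem.lit c ∈ D.F)) ∨
  (∃ k, r.otimes.length ≤ k ∧ k < j ∧ ∃ c, r.head[k]? = some c ∧ (true, Modality.P, c) ∈ Pre)

/-- Proof condition for `+∂_O q` (relative to the proof prefix `Pre`). -/
def plusO (q : Lit Atom) : Prop :=
  AElem.mlit true Modality.O q ∈ D.F ∨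
  (AElem.mlit true Modality.O q.compl ∉ D.F ∧
   AElem.mlit false Modality.O q ∉ D.F ∧
   AElem.mlit true Modality.P q.compl ∉ D.F ∧
   (∃ r ∈ D.R, ∃ i, D.applO Pre r q i) ∧
   (∀ s ∈ D.R, ∀ j, s.occ q.compl j →
     D.discardedAt Pre s j ∨
     (s.kind = RuleKind.obl ∧
       ∃ t ∈ D.R, ∃ k, t.occ q k ∧ D.appl Pre t q k ∧ D.sup t s) ∨
     ((s.kind = RuleKind.perm ∨ s.kind = RuleKind.defeater) ∧
       ∃ t ∈ D.R, ∃ k, t.occO q k ∧ D.applO Pre t q k ∧ D.sup t s)))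

/-- Proof condition for `-∂_O q` (strong negation of `+∂_O`). -/
def minusO (q : Lit Atom) : Prop :=
  AElem.mlit true Modality.O q ∉ D.F ∧
  (AElem.mlit true Modality.O q.compl ∈ D.F ∨
   AElem.mlit false Modality.O q ∈ D.F ∨
   AElem.mlit true Modality.P q.compl ∈ D.F ∨
   (∀ r ∈ D.R, ∀ i, r.occO q i → D.discardedAt Pre r i) ∨
   (∃ s ∈ D.R, ∃ j, s.occ q.compl j ∧ D.appl Pre s q.compl j ∧
     (s.kind = RuleKind.obl →
       ∀ t ∈ D.R, ∀ k, t.occ q k → D.discardedAt Pre t k ∨ ¬ D.sup t s) ∧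
     ((s.kind = RuleKind.perm ∨ s.kind = RuleKind.defeater) →
       ∀ t ∈ D.R, ∀ k, t.occO q k → D.discardedAt Pre t k ∨ ¬ D.sup t s)))

/-- Proof condition for `+∂_P q`. -/
def plusP (q : Lit Atom) : Prop :=
  AElem.mlit true Modality.P q ∈ D.F ∨
  (AElem.mlit true Modality.O q.compl ∉ D.F ∧
   AElem.mlit false Modality.P q ∉ D.F ∧
   (∃ r ∈ D.R, ∃ i, D.applP Pre r q i) ∧
   (∀ s ∈ D.R, ∀ j, s.occO q.compl j →
     D.discardedAt Pre s j ∨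
     (∃ t ∈ D.R, ∃ k, t.occ q k ∧ D.appl Pre t q k ∧ D.sup t s)))

/-- Proof condition for `-∂_P q` (strong negation of `+∂_P`). -/
def minusP (q : Lit Atom) : Prop :=
  AElem.mlit true Modality.P q ∉ D.F ∧
  (AElem.mlit true Modality.O q.compl ∈ D.F ∨
   AElem.mlit false Modality.P q ∈ D.F ∨
   (∀ r ∈ D.R, ∀ i, r.occP q i → D.discardedAt Pre r i) ∨
   (∃ s ∈ D.R, ∃ j, s.occO q.compl j ∧ D.appl Pre s q.compl j ∧
     ∀ t ∈ D.R, ∀ k, t.occ q k → D.discardedAt Pre t k ∨ ¬ D.sup t s))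

/-- The proof condition associated to a tagged literal. -/
def cond : Tag Atom → Prop
  | (true, Modality.O, q) => D.plusO Pre q
  | (false, Modality.O, q) => D.minusO Pre q
  | (true, Modality.P, q) => D.plusP Pre q
  | (false, Modality.P, q) => D.minusP Pre q

/-- A proof is a sequence of tagged literals each of which satisfies the
    proof conditions relative to the preceding initial part. -/
def ValidProof (Pr : Pfx Atom) : Prop :=
  ∀ i (h : i < Pr.length), D.cond (Pr.take i) (Pr.get ⟨i, h⟩)

/-- `D ⊢ ±∂_□ q`: some proof in `D` contains (ends with) `±∂_□ q`. -/
def Proves (b : Bool) (m : Modality) (q : Lit Atom) : Prop :=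
  ∃ Pr : Pfx Atom, D.ValidProof Pr ∧ (b, m, q) ∈ Pr

end Theory

/-- The superiority relation is acyclic: its transitive closure has no cycles. -/
def Acyclic (D : Theory Atom) : Prop :=
  ∀ r : Rule Atom, ¬ Relation.TransGen D.sup r r

/-- A consistent Defeasible Theory: `>` is acyclic and `F` contains no pair of
    complementary (modal) literals. -/
def Consistent (D : Theory Atom) : Prop :=
  Acyclic D ∧
  (∀ (m : Modality) (l : Lit Atom),
      ¬ (AElem.mlit true m l ∈ D.F ∧ AElem.mlit false m l ∈ D.F)) ∧
  (∀ l : Lit Atom, ¬ (AElem.lit l ∈ D.F ∧ AElem.lit l.compl ∈ D.F))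

/-- An O-consistent Defeasible Theory: `>` is acyclic and for no literal `l`
    does `F` contain both `O l` and `O ∼l`, or both `O l` and `P ∼l`. -/
def OConsistent (D : Theory Atom) : Prop :=
  Acyclic D ∧
  (∀ l : Lit Atom,
      ¬ (AElem.mlit true Modality.O l ∈ D.F ∧ AElem.mlit true Modality.O l.compl ∈ D.F)) ∧
  (∀ l : Lit Atom,
      ¬ (AElem.mlit true Modality.O l ∈ D.F ∧ AElem.mlit true Modality.P l.compl ∈ D.F))

end DDL

namespace DDL

/-- A literal `l` is weakly permitted in `D` iff `D ⊢ −∂_O ∼l`. -/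
def WeaklyPermitted {Atom : Type} [DecidableEq Atom]
    (D : Theory Atom) (l : Lit Atom) : Prop :=
  D.Proves false Modality.O l.compl

/- If `+∂_O l` holds because `O l` is a fact, O-consistency excludes the fact `O ∼l`, and `O l`
itself gives `−∂_O ∼l`. Otherwise every non-discarded rule for `∼l` is beaten by an applicable rule
for `l`. As `>` is acyclic and there are finitely many rules, some applicable rule for `l` is not
below any other in the transitive closure of `>`; such a rule cannot be beaten by a non-discarded
rule for `∼l`, and it witnesses the last clause of `−∂_O ∼l`. Appending `−∂_O ∼l` to the proof
prefix that justified `+∂_O l` gives a proof of `−∂_O ∼l`. -/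

open Relation

theorem exists_forall_not_transGen_of_acyclic {α : Type*} {r : α → α → Prop}
    (hr : ∀ a, ¬ TransGen r a a) {s : Set α} (hs : s.Finite) (hne : s.Nonempty) :
    ∃ a ∈ s, ∀ b ∈ s, ¬ TransGen r b a := by
  have : Finite s := hs
  let t : s → s → Prop := fun a b => TransGen r a b
  have : IsTrans s t := ⟨fun _ _ _ => TransGen.trans⟩
  have : Std.Irrefl t := ⟨fun a => hr a⟩
  obtain ⟨⟨a, ha⟩, -, hmin⟩ :=
    (Finite.wellFounded_of_trans_of_irrefl t).has_min Set.univ ⟨⟨_, hne.some_mem⟩, trivial⟩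
  exact ⟨a, ha, fun b hb => hmin ⟨b, hb⟩ trivial⟩

@[simp]
theorem Lit.compl_compl {Atom : Type} (l : Lit Atom) : l.compl.compl = l := by
  cases l <;> rfl

variable {Atom : Type}

theorem Rule.occ_of_occO {r : Rule Atom} {q : Lit Atom} {j : ℕ} (h : r.occO q j) :
    r.occ q j := by
  rcases h with ⟨rfl, -, h⟩ | ⟨-, h⟩
  · exact h
  · exact (List.getElem?_append_left (List.getElem?_eq_some_iff.mp h).1).trans h

namespace Theory

variable {D : Theory Atom} {Pre : Pfx Atom}

theorem exists_appl_not_beaten (hD : Acyclic D) {l : Lit Atom}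
    (hsupp : ∃ r ∈ D.R, ∃ i, D.applO Pre r l i)
    (hattack : ∀ s ∈ D.R, ∀ j, s.occ l.compl j →
      D.discardedAt Pre s j ∨
      (s.kind = RuleKind.obl ∧ ∃ t ∈ D.R, ∃ k, t.occ l k ∧ D.appl Pre t l k ∧ D.sup t s) ∨
      ((s.kind = RuleKind.perm ∨ s.kind = RuleKind.defeater) ∧
        ∃ t ∈ D.R, ∃ k, t.occO l k ∧ D.applO Pre t l k ∧ D.sup t s)) :
    ∃ s ∈ D.R, ∃ j, s.occ l j ∧ D.appl Pre s l j ∧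
      ∀ t ∈ D.R, ∀ k, t.occ l.compl k → D.discardedAt Pre t k ∨ ¬ D.sup t s := by
  set supporters : Set (Rule Atom) := {u | u ∈ D.R ∧ ∃ j, u.occ l j ∧ D.appl Pre u l j}
  have hfin : supporters.Finite := D.R.finite_toSet.subset fun _ hu => hu.1
  have hne : supporters.Nonempty := by
    obtain ⟨r, hr, i, hri⟩ := hsupp
    exact ⟨r, hr, i, Rule.occ_of_occO hri.1, Or.inl hri⟩
  obtain ⟨s, ⟨hsR, j, hocc, happl⟩, hmax⟩ := exists_forall_not_transGen_of_acyclic hD hfin hne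
  refine ⟨s, hsR, j, hocc, happl, fun t htR k hk => or_iff_not_imp_left.mpr fun hnd hts => ?_⟩
  have hbeaten : ∃ u ∈ supporters, D.sup u t := by
    rcases hattack t htR k hk with hd | ⟨-, u, huR, i, hi, hu, hut⟩ | ⟨-, u, huR, i, hi, hu, hut⟩
    · exact absurd hd hnd
    · exact ⟨u, ⟨huR, i, hi, hu⟩, hut⟩
    · exact ⟨u, ⟨huR, i, Rule.occ_of_occO hi, Or.inl hu⟩, hut⟩
  obtain ⟨u, hu, hut⟩ := hbeaten
  exact hmax u hu (.tail (.single hut) hts)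

theorem minusO_compl_of_plusO (hD : OConsistent D) {l : Lit Atom} (h : D.plusO Pre l) :
    D.minusO Pre l.compl := by
  rcases h with hfact | ⟨hnfact, -, -, hsupp, hattack⟩
  · exact ⟨fun hc => hD.2.1 l ⟨hfact, hc⟩, Or.inl (by simpa using hfact)⟩
  obtain ⟨s, hsR, j, hocc, happl, hunbeaten⟩ := exists_appl_not_beaten hD.1 hsupp hattack
  refine ⟨hnfact, Or.inr <| Or.inr <| Or.inr <| Or.inr ⟨s, hsR, j, ?_, ?_, ?_, ?_⟩⟩
  · simpa using hocc
  · simpa using happl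
  · exact fun _ => hunbeaten
  · exact fun _ t htR k hk => hunbeaten t htR k (Rule.occ_of_occO hk)

theorem ValidProof.take {Pr : Pfx Atom} (h : D.ValidProof Pr) (i : ℕ) :
    D.ValidProof (Pr.take i) := by
  intro j hj
  simp only [List.length_take, lt_min_iff] at hj
  simpa [List.take_take, Nat.min_eq_left hj.1.le] using h j hj.2

theorem ValidProof.append_singleton {Pr : Pfx Atom} (h : D.ValidProof Pr) {t : Tag Atom}
    (ht : D.cond Pr t) : D.ValidProof (Pr ++ [t]) := by
  intro j hj
  rw [List.length_append, List.length_singleton, Nat.lt_succ_iff] at hj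
  rcases hj.lt_or_eq with hj | rfl
  · simpa [List.take_append_of_le_length hj.le, List.getElem_append_left hj] using h j hj
  · simpa using ht

theorem ValidProof.exists_prefix_of_mem {Pr : Pfx Atom} (h : D.ValidProof Pr) {t : Tag Atom}
    (ht : t ∈ Pr) : ∃ Pre : Pfx Atom, D.ValidProof Pre ∧ D.cond Pre t := by
  obtain ⟨i, hi, rfl⟩ := List.mem_iff_getElem.mp ht
  exact ⟨Pr.take i, h.take i, h i hi⟩

end Theory

/-- **"Ought implies Can" for weak permission.**  Let `D` be an O-consistent
Defeasible Theory.  For every literal `l`, if `D ⊢ +∂_O l` then `l` is weakly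
permitted in `D`, i.e. `D ⊢ −∂_O ∼l`. -/
theorem oconsistent_ought_implies_can
    {Atom : Type} [DecidableEq Atom] (D : Theory Atom) (hD : OConsistent D) :
    ∀ l : Lit Atom,
      D.Proves true Modality.O l → WeaklyPermitted D l := by
  rintro l ⟨Pr, hPr, hmem⟩
  obtain ⟨Pre, hPre, hplus⟩ := hPr.exists_prefix_of_mem hmem
  exact ⟨Pre ++ [(false, Modality.O, l.compl)],
    hPre.append_singleton (Theory.minusO_compl_of_plusO hD hplus), by simp⟩

end DDL
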